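/- Let i be an index, v ∈ I^{2l} with v_{-i} = 0, α ∈ Γ, and write v_- = Σ_{k<0} e_k v_k, v_+ = Σ_{k>0} e_k v_k. Then the ESD transformation factors as T(e_i, v, ⟨v_-, v_+⟩ + α) = T_{i,-i}(α + 2v_i) · T_{-l,-i}(v_{-l}·sgn(i)) ⋯ T_{-1,-i}(v_{-1}·sgn(i)) · T_{1,-i}(v_1·sgn(i)) ⋯ T_{l,-i}(v_l·sgn(i)), where T_{jk}(a) = T(e_j, e_{-k}a·sgn(-k), 0) for k ≠ -j and T_{j,-j}(a) = T(e_j, 0, a). -/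

import Mathlib

open scoped BigOperators

/-- Index set {-l,…,-1,1,…,l}: `Sum.inl k` represents -(k+1), `Sum.inr k` represents k+1. -/
abbrev Idx (l : ℕ) := Fin l ⊕ Fin l

namespace Idx
/-- negation of an index -/
def neg {l : ℕ} : Idx l → Idx l := Sum.swap
/-- sign of an index, as a ring element -/
def sgn (R : Type*) [CommRing R] {l : ℕ} : Idx l → R
  | Sum.inl _ => -1
  | Sum.inr _ => 1
end Idx

variable {R : Type*} [CommRing R] {l : ℕ}

/-- the standard symplectic form ⟨u,v⟩ = Σᵢ sgn(i)·uᵢ·v₋ᵢ -/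
def sform (u v : Idx l → R) : R := ∑ i : Idx l, Idx.sgn R i * u i * v (Idx.neg i)

/-- standard basis vector e_i -/
def sbv (R : Type*) [CommRing R] {l : ℕ} (i : Idx l) : Idx l → R := Pi.single i 1

/-- Eichler–Siegel–Dickson transformation T(u,v,a) : w ↦ w + u(⟨v,w⟩+a⟨u,w⟩) + v⟨u,w⟩ -/
def esd (u v : Idx l → R) (a : R) (w : Idx l → R) : Idx l → R :=
  w + (sform v w + a * sform u w) • u + (sform u w) • v

/-- elementary symplectic transvection: T_{ij}(a) = T(e_i, e_{-j}·a·sgn(-j), 0) for j ≠ -i,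
and the long root T_{i,-i}(a) = T(e_i, 0, a). -/
def tvGen (i j : Idx l) (a : R) : (Idx l → R) → (Idx l → R) :=
  if j = Idx.neg i then esd (sbv R i) 0 a
  else esd (sbv R i) ((a * Idx.sgn R (Idx.neg j)) • sbv R (Idx.neg j)) 0

/-- negative part v₋ of a vector -/
def vminus (v : Idx l → R) : Idx l → R
  | Sum.inl j => v (Sum.inl j)
  | Sum.inr _ => 0

/-- positive part v₊ of a vector -/
def vplus (v : Idx l → R) : Idx l → R
  | Sum.inl _ => 0
  | Sum.inr j => v (Sum.inr j)

/-- the negative indices -l, …, -1 in order -/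
def negIdxList (l : ℕ) : List (Idx l) := ((List.finRange l).reverse).map Sum.inl

/-- the positive indices 1, …, l in order -/
def posIdxList (l : ℕ) : List (Idx l) := (List.finRange l).map Sum.inr

/-- all indices -l, …, -1, 1, …, l in order -/
def allIdxList (l : ℕ) : List (Idx l) := negIdxList l ++ posIdxList l

section Helpers
variable {R : Type*} [CommRing R] {l : ℕ}

lemma Idx.neg_neg (j : Idx l) : Idx.neg (Idx.neg j) = j := Sum.swap_swap j

lemma Idx.neg_ne_self (j : Idx l) : Idx.neg j ≠ j := by cases j <;> simp [Idx.neg]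

lemma Idx.neg_inj {j k : Idx l} (h : Idx.neg j = Idx.neg k) : j = k := by
  have := congrArg Idx.neg h; rwa [Idx.neg_neg, Idx.neg_neg] at this

lemma Idx.sgn_mul_sgn (j : Idx l) : Idx.sgn R j * Idx.sgn R j = 1 := by
  cases j <;> simp [Idx.sgn]

lemma sform_sbv_left (j : Idx l) (u : Idx l → R) :
    sform (sbv R j) u = Idx.sgn R j * u (Idx.neg j) := by
  unfold sform sbv
  rw [Finset.sum_eq_single j]
  · simp
  · intro b _ hb; simp [Pi.single_eq_of_ne hb]
  · simp

lemma sform_smul_left (r : R) (u w : Idx l → R) :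
    sform (r • u) w = r * sform u w := by
  unfold sform
  rw [Finset.mul_sum]
  refine Finset.sum_congr rfl fun j _ => ?_
  simp [Pi.smul_apply]; ring

lemma sform_zero_left (w : Idx l → R) : sform (0 : Idx l → R) w = 0 := by
  unfold sform; simp

lemma sbv_apply (j m : Idx l) : sbv R j m = if m = j then 1 else 0 := by
  unfold sbv
  by_cases h : m = j
  · subst h; simp
  · simp [Pi.single_eq_of_ne h, h]

end Helpers
section Helpers2
variable {R : Type*} [CommRing R] {l : ℕ}

lemma esd_apply (u v : Idx l → R) (a : R) (w : Idx l → R) (m : Idx l) :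
    esd u v a w m = w m + (sform v w + a * sform u w) * u m + sform u w * v m := by
  unfold esd; simp [Pi.smul_apply, smul_eq_mul]

lemma tvGen_long_apply (i : Idx l) (a : R) (w : Idx l → R) (m : Idx l) :
    tvGen i (Idx.neg i) a w m
      = w m + (if m = i then a * Idx.sgn R i * w (Idx.neg i) else 0) := by
  unfold tvGen
  rw [if_pos rfl, esd_apply, sform_zero_left, sform_sbv_left, sbv_apply]
  by_cases h : m = i <;> simp [h] <;> ring

lemma tvGen_short_apply (i j : Idx l) (hji : j ≠ i) (a : R) (w : Idx l → R) (m : Idx l) :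
    tvGen j (Idx.neg i) a w m
      = w m + (if m = j then a * Idx.sgn R i * Idx.sgn R i * w (Idx.neg i) else 0)
          + (if m = i then Idx.sgn R j * w (Idx.neg j) * a * Idx.sgn R i else 0) := by
  unfold tvGen
  rw [if_neg (fun h => hji (Idx.neg_inj h).symm), esd_apply, Idx.neg_neg,
    sform_smul_left, sform_sbv_left, sform_sbv_left]
  simp only [Pi.smul_apply, smul_eq_mul, sbv_apply]
  by_cases h1 : m = j <;> by_cases h2 : m = i <;> simp [h1, h2] <;> ring

/-- R-valued membership indicator for a list -/
def ind (R : Type*) [CommRing R] {l : ℕ} (m : Idx l) : List (Idx l) → R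
  | [] => 0
  | j :: L => if m = j then 1 else ind R m L

lemma ind_of_not_mem {m : Idx l} : ∀ {L : List (Idx l)}, m ∉ L → ind R m L = 0
  | [], _ => rfl
  | j :: L, h => by
    rw [ind, if_neg (fun h' => h (by rw [h']; exact (List.mem_cons_self : j ∈ j :: L)))]
    exact ind_of_not_mem (fun h' => h (List.mem_cons_of_mem _ h'))

lemma ind_of_mem {m : Idx l} : ∀ {L : List (Idx l)}, m ∈ L → ind R m L = 1
  | j :: L, h => by
    rw [ind]
    by_cases h' : m = j
    · rw [if_pos h']
    · rw [if_neg h']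
      exact ind_of_mem ((List.mem_cons.mp h).resolve_left h')

/-- accumulated coefficient on the `i`-th coordinate for a list of short factors -/
def coefC (i : Idx l) (v w : Idx l → R) : List (Idx l) → R
  | [] => 0
  | j :: L => v j * Idx.sgn R j *
      (w (Idx.neg j) + ind R (Idx.neg j) L * (v (Idx.neg j) * Idx.sgn R i * w (Idx.neg i)))
      + coefC i v w L

lemma foldA (i : Idx l) (v w : Idx l → R) :
    ∀ L : List (Idx l), (∀ j ∈ L, j ≠ i ∧ j ≠ Idx.neg i) → L.Nodup →
    ∀ m, ((L.map (fun j => tvGen j (Idx.neg i) (v j * Idx.sgn R i))).foldr (· ∘ ·) id) w m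
      = w m + ind R m L * (v m * Idx.sgn R i * w (Idx.neg i))
          + (if m = i then coefC i v w L else 0)
  | [], _, _, m => by simp [ind, coefC]
  | j :: L, hL, hnd, m => by
    have hji : j ≠ i := (hL j (by simp)).1
    have hjni : j ≠ Idx.neg i := (hL j (by simp)).2
    have hIH := foldA i v w L (fun k hk => hL k (List.mem_cons_of_mem _ hk))
      (List.nodup_cons.mp hnd).2
    have hjL : j ∉ L := (List.nodup_cons.mp hnd).1
    have hu : ((L.map (fun j => tvGen j (Idx.neg i) (v j * Idx.sgn R i))).foldr (· ∘ ·) id) w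
        = fun m => w m + ind R m L * (v m * Idx.sgn R i * w (Idx.neg i))
          + (if m = i then coefC i v w L else 0) := funext hIH
    have hniL : Idx.neg i ∉ L := fun h => (hL _ (List.mem_cons_of_mem _ h)).2 rfl
    have hiL : i ∉ L := fun h => (hL _ (List.mem_cons_of_mem _ h)).1 rfl
    have hnji : Idx.neg j ≠ i := fun h => hjni (by rw [← h, Idx.neg_neg])
    simp only [List.map_cons, List.foldr_cons, Function.comp_apply, hu]
    rw [tvGen_short_apply i j hji]
    simp only [ind_of_not_mem hniL, if_neg hnji,
      if_neg (fun h : Idx.neg i = i => Idx.neg_ne_self i h), zero_mul, add_zero]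
    rw [coefC, ind]
    have hs := Idx.sgn_mul_sgn (R := R) i
    by_cases h1 : m = j
    · simp only [h1, hji, ind_of_not_mem hjL, if_true, if_false, ite_true, ite_false,
        eq_self_iff_true, ne_eq, not_false_eq_true, if_neg hji, if_pos rfl,
        zero_mul, mul_zero, add_zero]
      linear_combination (v j * Idx.sgn R i * w (Idx.neg i)) * hs
    · by_cases h2 : m = i
      · simp only [h2, if_pos rfl, ind_of_not_mem hiL, if_neg (Ne.symm hji), ite_true,
          zero_mul, mul_zero, add_zero]
        linear_combination (v j * Idx.sgn R j *
          (w (Idx.neg j) + ind R (Idx.neg j) L * (v (Idx.neg j) * Idx.sgn R i * w (Idx.neg i)))) * hs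
      · simp only [if_neg h1, if_neg h2]
        ring

end Helpers2
section Helpers3
variable {R : Type*} [CommRing R] {l : ℕ}

lemma foldr_comp_append {α : Type*} (fs gs : List (α → α)) :
    (fs.foldr (· ∘ ·) id) ∘ (gs.foldr (· ∘ ·) id) = ((fs ++ gs).foldr (· ∘ ·) id) := by
  induction fs with
  | nil => simp
  | cons f fs ih => simp only [List.foldr_cons, List.cons_append, Function.comp_assoc, ih]

lemma coefC_noneg (i : Idx l) (v w : Idx l → R) :
    ∀ B : List (Idx l), (∀ j ∈ B, Idx.neg j ∉ B) →
      coefC i v w B = (B.map (fun j => v j * Idx.sgn R j * w (Idx.neg j))).sum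
  | [], _ => rfl
  | j :: B, h => by
    rw [coefC, List.map_cons, List.sum_cons,
      ind_of_not_mem (fun h' => h j (List.mem_cons_self : j ∈ j :: B) (List.mem_cons_of_mem _ h')),
      coefC_noneg i v w B (fun k hk h' => h k (List.mem_cons_of_mem _ hk) (List.mem_cons_of_mem _ h'))]
    ring

lemma coefC_append (i : Idx l) (v w : Idx l → R) (B : List (Idx l)) :
    ∀ A : List (Idx l), (∀ j ∈ A, Idx.neg j ∈ B) →
      coefC i v w (A ++ B)
        = (A.map (fun j => v j * Idx.sgn R j *
            (w (Idx.neg j) + v (Idx.neg j) * Idx.sgn R i * w (Idx.neg i)))).sum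
          + coefC i v w B
  | [], _ => by simp
  | j :: A, h => by
    rw [List.cons_append, coefC, List.map_cons, List.sum_cons,
      ind_of_mem (List.mem_append_right A (h j (List.mem_cons_self : j ∈ j :: A))),
      coefC_append i v w B A (fun k hk => h k (List.mem_cons_of_mem _ hk))]
    ring

lemma list_sum_filter {α : Type*} (q : α → Bool) (h : α → R) :
    ∀ L : List α, ((L.filter q).map h).sum = (L.map (fun k => if q k then h k else 0)).sum
  | [] => rfl
  | a :: L => by
    by_cases hq : q a <;>
      simp [List.filter_cons, hq, list_sum_filter q h L]

lemma sum_finRange (h : Fin l → R) : ((List.finRange l).map h).sum = ∑ k, h k :=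
  (Fin.sum_univ_def h).symm

lemma sum_finRange_rev (h : Fin l → R) :
    (((List.finRange l).reverse).map h).sum = ∑ k, h k := by
  rw [List.map_reverse, List.sum_reverse, sum_finRange]

lemma sum_negIdx (P : Idx l → Bool) (g : Idx l → R) :
    ((((negIdxList l)).filter P).map g).sum
      = ∑ k : Fin l, if P (Sum.inl k) then g (Sum.inl k) else 0 := by
  unfold negIdxList
  rw [List.filter_map, List.map_map, list_sum_filter, sum_finRange_rev]
  exact Finset.sum_congr rfl fun k _ => rfl

lemma sum_posIdx (P : Idx l → Bool) (g : Idx l → R) :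
    ((((posIdxList l)).filter P).map g).sum
      = ∑ k : Fin l, if P (Sum.inr k) then g (Sum.inr k) else 0 := by
  unfold posIdxList
  rw [List.filter_map, List.map_map, list_sum_filter, sum_finRange]
  exact Finset.sum_congr rfl fun k _ => rfl

lemma sum_ite_ne (k0 : Fin l) (h : Fin l → R) :
    ∑ k : Fin l, (if k = k0 then 0 else h k) = (∑ k : Fin l, h k) - h k0 := by
  have e : ∀ k : Fin l, (if k = k0 then 0 else h k) = h k - (if k = k0 then h k else 0) := by
    intro k; by_cases hk : k = k0 <;> simp [hk]
  simp_rw [e]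
  rw [Finset.sum_sub_distrib, Finset.sum_ite_eq' Finset.univ k0 h]
  simp

end Helpers3
section Helpers4
variable {R : Type*} [CommRing R] {l : ℕ}

lemma sform_sum_type (v w : Idx l → R) :
    sform v w = (∑ k : Fin l, -(v (Sum.inl k) * w (Sum.inr k)))
      + ∑ k : Fin l, v (Sum.inr k) * w (Sum.inl k) := by
  unfold sform
  rw [Fintype.sum_sum_type]
  congr 1 <;> exact Finset.sum_congr rfl fun k _ => by simp [Idx.sgn, Idx.neg]

lemma sform_vmp (v : Idx l → R) :
    sform (vminus v) (vplus v) = ∑ k : Fin l, -(v (Sum.inl k) * v (Sum.inr k)) := by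
  rw [sform_sum_type]
  simp [vminus, vplus]

lemma key_sum (i : Idx l) (v w : Idx l → R) (hvi : v (Idx.neg i) = 0) :
    sform v w + sform (vminus v) (vplus v) * (Idx.sgn R i * w (Idx.neg i))
      = coefC i v w (((negIdxList l).filter (fun j => decide (j ≠ i ∧ j ≠ Idx.neg i)))
          ++ ((posIdxList l).filter (fun j => decide (j ≠ i ∧ j ≠ Idx.neg i))))
        + v i * Idx.sgn R i * w (Idx.neg i) := by
  have hBneg : ∀ j ∈ (posIdxList l).filter (fun j => decide (j ≠ i ∧ j ≠ Idx.neg i)),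
      Idx.neg j ∉ (posIdxList l).filter (fun j => decide (j ≠ i ∧ j ≠ Idx.neg i)) := by
    intro j hj h'
    have hj1 : j ∈ posIdxList l := (List.mem_filter.mp hj).1
    have hj2 : Idx.neg j ∈ posIdxList l := (List.mem_filter.mp h').1
    obtain ⟨k, _, rfl⟩ := List.mem_map.mp hj1
    obtain ⟨k', _, hk'⟩ := List.mem_map.mp hj2
    simp [Idx.neg] at hk'
  have hA : ∀ j ∈ (negIdxList l).filter (fun j => decide (j ≠ i ∧ j ≠ Idx.neg i)),
      Idx.neg j ∈ (posIdxList l).filter (fun j => decide (j ≠ i ∧ j ≠ Idx.neg i)) := by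
    intro j hj
    have hj1 := (List.mem_filter.mp hj).1
    have hj2 := (List.mem_filter.mp hj).2
    obtain ⟨k, hk, rfl⟩ := List.mem_map.mp hj1
    refine List.mem_filter.mpr ⟨List.mem_map.mpr ⟨k, List.mem_finRange k, rfl⟩, ?_⟩
    simp only [decide_eq_true_eq] at hj2 ⊢
    exact ⟨fun h => hj2.2 (by rw [← h, Idx.neg_neg]), fun h => hj2.1 (Idx.neg_inj h)⟩
  rw [coefC_append i v w _ _ hA, coefC_noneg i v w _ hBneg, sum_negIdx, sum_posIdx,
    sform_sum_type, sform_vmp]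
  rcases i with k0 | k0
  · -- i = inl k0, neg i = inr k0, sgn i = -1, v (inr k0) = 0
    have hvi' : v (Sum.inr k0) = 0 := hvi
    have e1 : (∑ k : Fin l, if (fun j => decide (j ≠ Sum.inl k0 ∧ j ≠ Idx.neg (Sum.inl k0))) (Sum.inl k)
          then v (Sum.inl k) * Idx.sgn R (Sum.inl k) *
            (w (Idx.neg (Sum.inl k)) + v (Idx.neg (Sum.inl k)) * Idx.sgn R (Sum.inl k0) * w (Idx.neg (Sum.inl k0)))
          else 0)
        = ∑ k : Fin l, (if k = k0 then 0 else
            -(v (Sum.inl k) * (w (Sum.inr k) - v (Sum.inr k) * w (Sum.inr k0)))) := by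
      refine Finset.sum_congr rfl fun k _ => ?_
      by_cases hk : k = k0
      · subst hk; simp [Idx.neg, Idx.sgn]
      · rw [if_neg hk, if_pos (by simp [Idx.neg, hk])]
        simp only [Idx.neg, Idx.sgn, Sum.swap, Sum.elim_inl, Sum.elim_inr]
        ring
    have e2 : (∑ k : Fin l, if (fun j => decide (j ≠ Sum.inl k0 ∧ j ≠ Idx.neg (Sum.inl k0))) (Sum.inr k)
          then v (Sum.inr k) * Idx.sgn R (Sum.inr k) * w (Idx.neg (Sum.inr k)) else 0)
        = ∑ k : Fin l, (if k = k0 then 0 else v (Sum.inr k) * w (Sum.inl k)) := by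
      refine Finset.sum_congr rfl fun k _ => ?_
      by_cases hk : k = k0
      · subst hk; simp [Idx.neg, Idx.sgn]
      · rw [if_neg hk, if_pos (by simp [Idx.neg, hk])]
        simp [Idx.neg, Idx.sgn]
    rw [e1, e2, sum_ite_ne, sum_ite_ne, hvi']
    have hsplit : (∑ k : Fin l, -(v (Sum.inl k) * (w (Sum.inr k) - v (Sum.inr k) * w (Sum.inr k0))))
        = (∑ k : Fin l, -(v (Sum.inl k) * w (Sum.inr k)))
          + (∑ k : Fin l, -(v (Sum.inl k) * v (Sum.inr k))) * (-w (Sum.inr k0)) := by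
      rw [Finset.sum_mul, ← Finset.sum_add_distrib]
      exact Finset.sum_congr rfl fun k _ => by ring
    rw [hsplit]
    simp only [Idx.neg, Idx.sgn, Sum.swap, Sum.elim_inl, Sum.elim_inr]
    ring
  · -- i = inr k0, neg i = inl k0, sgn i = 1, v (inl k0) = 0
    have hvi' : v (Sum.inl k0) = 0 := hvi
    have e1 : (∑ k : Fin l, if (fun j => decide (j ≠ Sum.inr k0 ∧ j ≠ Idx.neg (Sum.inr k0))) (Sum.inl k)
          then v (Sum.inl k) * Idx.sgn R (Sum.inl k) *
            (w (Idx.neg (Sum.inl k)) + v (Idx.neg (Sum.inl k)) * Idx.sgn R (Sum.inr k0) * w (Idx.neg (Sum.inr k0)))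
          else 0)
        = ∑ k : Fin l, (if k = k0 then 0 else
            -(v (Sum.inl k) * (w (Sum.inr k) + v (Sum.inr k) * w (Sum.inl k0)))) := by
      refine Finset.sum_congr rfl fun k _ => ?_
      by_cases hk : k = k0
      · subst hk; simp [Idx.neg, Idx.sgn]
      · rw [if_neg hk, if_pos (by simp [Idx.neg, hk])]
        simp only [Idx.neg, Idx.sgn, Sum.swap, Sum.elim_inl, Sum.elim_inr]
        ring
    have e2 : (∑ k : Fin l, if (fun j => decide (j ≠ Sum.inr k0 ∧ j ≠ Idx.neg (Sum.inr k0))) (Sum.inr k)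
          then v (Sum.inr k) * Idx.sgn R (Sum.inr k) * w (Idx.neg (Sum.inr k)) else 0)
        = ∑ k : Fin l, (if k = k0 then 0 else v (Sum.inr k) * w (Sum.inl k)) := by
      refine Finset.sum_congr rfl fun k _ => ?_
      by_cases hk : k = k0
      · subst hk; simp [Idx.neg, Idx.sgn]
      · rw [if_neg hk, if_pos (by simp [Idx.neg, hk])]
        simp [Idx.neg, Idx.sgn]
    rw [e1, e2, sum_ite_ne, sum_ite_ne, hvi']
    have hsplit : (∑ k : Fin l, -(v (Sum.inl k) * (w (Sum.inr k) + v (Sum.inr k) * w (Sum.inl k0))))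
        = (∑ k : Fin l, -(v (Sum.inl k) * w (Sum.inr k)))
          + (∑ k : Fin l, -(v (Sum.inl k) * v (Sum.inr k))) * (w (Sum.inl k0)) := by
      rw [Finset.sum_mul, ← Finset.sum_add_distrib]
      exact Finset.sum_congr rfl fun k _ => by ring
    rw [hsplit]
    simp only [Idx.neg, Idx.sgn, Sum.swap, Sum.elim_inl, Sum.elim_inr]
    ring

end Helpers4
/-- decomposition of T(e_i, v, ⟨v₋,v₊⟩+α) into elementary transvections:
T(e_i, v, ⟨v₋,v₊⟩+α) = T_{i,-i}(α+2vᵢ)·T_{-l,-i}(v₋ₗ sgn i)⋯T_{-1,-i}(v₋₁ sgn i)·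
T_{1,-i}(v₁ sgn i)⋯T_{l,-i}(v_l sgn i) (the factors with index ±i being the long factor
in front; the factor at -i is trivial as v₋ᵢ = 0). -/
theorem esd_unipotent_decomposition (I : Ideal R) (Γ : AddSubgroup R)
    (hsub : ∀ x ∈ Γ, x ∈ I)
    (h2 : ∀ a ∈ I, (2 : R) * a ∈ Γ)
    (hra : ∀ r : R, ∀ a ∈ I, r * a ^ 2 ∈ Γ)
    (har : ∀ α ∈ Γ, ∀ r : R, α * r ^ 2 ∈ Γ)
    (i : Idx l) (v : Idx l → R) (hv : ∀ k, v k ∈ I) (hvi : v (Idx.neg i) = 0)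
    (α : R) (hα : α ∈ Γ) :
    esd (sbv R i) v (sform (vminus v) (vplus v) + α) =
      tvGen i (Idx.neg i) (α + 2 * v i) ∘
      (((negIdxList l).filter (fun j => decide (j ≠ i ∧ j ≠ Idx.neg i))).map
          (fun j => tvGen j (Idx.neg i) (v j * Idx.sgn R i))).foldr (· ∘ ·) id ∘
      (((posIdxList l).filter (fun j => decide (j ≠ i ∧ j ≠ Idx.neg i))).map
          (fun j => tvGen j (Idx.neg i) (v j * Idx.sgn R i))).foldr (· ∘ ·) id := by
  clear hsub h2 hra har hα hv
  set P : Idx l → Bool := fun j => decide (j ≠ i ∧ j ≠ Idx.neg i) with hP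
  set L0 : List (Idx l) := (negIdxList l).filter P ++ (posIdxList l).filter P with hL0
  have hmem : ∀ j ∈ L0, j ≠ i ∧ j ≠ Idx.neg i := by
    intro j hj
    rcases List.mem_append.mp hj with h | h <;>
      exact of_decide_eq_true (List.mem_filter.mp h).2
  have hnodup : L0.Nodup := by
    have h1 : (negIdxList l).Nodup :=
      (List.nodup_reverse.mpr (List.nodup_finRange l)).map Sum.inl_injective
    have h2 : (posIdxList l).Nodup := (List.nodup_finRange l).map Sum.inr_injective
    refine ((h1.filter P).append (h2.filter P)) ?_
    intro a ha hb
    obtain ⟨k, _, rfl⟩ := List.mem_map.mp (List.mem_filter.mp ha).1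
    obtain ⟨k', _, hk⟩ := List.mem_map.mp (List.mem_filter.mp hb).1
    simp at hk
  have hiL0 : i ∉ L0 := fun h => (hmem i h).1 rfl
  have hniL0 : Idx.neg i ∉ L0 := fun h => (hmem _ h).2 rfl
  have hcomp :
      ((((negIdxList l).filter P).map
          (fun j => tvGen j (Idx.neg i) (v j * Idx.sgn R i))).foldr (· ∘ ·) id) ∘
        ((((posIdxList l).filter P).map
          (fun j => tvGen j (Idx.neg i) (v j * Idx.sgn R i))).foldr (· ∘ ·) id)
      = ((L0.map (fun j => tvGen j (Idx.neg i) (v j * Idx.sgn R i))).foldr (· ∘ ·) id) := by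
    rw [foldr_comp_append, ← List.map_append]
  funext w m
  have hu := foldA i v w L0 hmem hnodup
  simp only [Function.comp_apply, hcomp]
  rw [tvGen_long_apply, hu m, hu (Idx.neg i), ind_of_not_mem hniL0,
    if_neg (Idx.neg_ne_self i), esd_apply, sform_sbv_left, sbv_apply]
  by_cases hm : m = i
  · rw [hm, if_pos rfl, if_pos rfl, if_pos rfl, ind_of_not_mem hiL0]
    have hk := key_sum i v w hvi
    rw [hL0] at *
    linear_combination hk
  · rw [if_neg hm, if_neg hm, if_neg hm]
    by_cases hm2 : m = Idx.neg i
    · rw [hm2, ind_of_not_mem hniL0, hvi]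
      ring
    · have hmL : m ∈ L0 := by
        rw [hL0]
        rcases m with k | k
        · exact List.mem_append_left _ (List.mem_filter.mpr
            ⟨List.mem_map.mpr ⟨k, List.mem_reverse.mpr (List.mem_finRange k), rfl⟩,
              by simp [hP, hm, hm2]⟩)
        · exact List.mem_append_right _ (List.mem_filter.mpr
            ⟨List.mem_map.mpr ⟨k, List.mem_finRange k, rfl⟩, by simp [hP, hm, hm2]⟩)
      rw [ind_of_mem hmL]
      ring
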